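/- For every n ≥ 1 and every x ≥ √n, one has (2Φ(-x/√n))ⁿ ≤ (2^{3n/2}/π^{n/2}) · exp(-x²/2), where Φ is the standard normal cumulative distribution function Φ(s) = ∫_{-∞}^{s} (1/√(2π)) e^{-u²/2} du. -/

import Mathlib

/-!
Each factor is controlled by the Gaussian tail bound `Φ(-y) ≤ e^{-y²/2} / (y √(2π))`: for
`u ≥ y` one has `u²/2 ≥ y u - y²/2`, so the tail integral of `e^{-u²/2}` over `(y, ∞)` is at most
that of `e^{y²/2 - y u}`, which is `e^{-y²/2} / y`. For `y = x/√n ≥ 1` this gives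
`2Φ(-x/√n) ≤ √(2/π) e^{-x²/(2n)}`, and the `n`-th power is `(2/π)^{n/2} e^{-x²/2}`.
-/

open Real

/-- The standard normal cumulative distribution function. -/
noncomputable def stdNormalCDF (s : ℝ) : ℝ :=
  ∫ u in Set.Iic s, (1 / Real.sqrt (2 * Real.pi)) * Real.exp (-u ^ 2 / 2)

open MeasureTheory Set

lemma integral_Ioi_exp_neg_sq_div_two_le {y : ℝ} (hy : 0 < y) :
    ∫ u in Ioi y, exp (-u ^ 2 / 2) ≤ exp (-y ^ 2 / 2) / y := by
  have hslope : -y < 0 := neg_neg_of_pos hy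
  calc ∫ u in Ioi y, exp (-u ^ 2 / 2)
      ≤ ∫ u in Ioi y, exp (y ^ 2 / 2) * exp (-y * u) := by
        refine setIntegral_mono_on ?_ ((integrableOn_exp_mul_Ioi hslope y).const_mul _)
          measurableSet_Ioi fun u _ => ?_
        · refine (integrable_exp_neg_mul_sq (b := 1 / 2) (by norm_num)).integrableOn.congr_fun
            (fun u _ => ?_) measurableSet_Ioi
          ring_nf
        · rw [← exp_add]
          exact exp_le_exp.2 (by nlinarith [sq_nonneg (u - y)])
    _ = exp (-y ^ 2 / 2) / y := by
        rw [integral_const_mul, integral_exp_mul_Ioi hslope, neg_div_neg_eq, ← mul_div_assoc,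
          ← exp_add]
        ring_nf

lemma stdNormalCDF_neg_le {y : ℝ} (hy : 0 < y) :
    stdNormalCDF (-y) ≤ exp (-y ^ 2 / 2) / (y * sqrt (2 * π)) := by
  have hflip : ∫ u in Iic (-y), exp (-u ^ 2 / 2) = ∫ u in Ioi y, exp (-u ^ 2 / 2) := by
    rw [← integral_comp_neg_Ioi]
    simp only [neg_sq]
  rw [stdNormalCDF, integral_const_mul, hflip, one_div_mul_eq_div, ← div_div,
    div_le_div_iff_of_pos_right (by positivity)]
  exact integral_Ioi_exp_neg_sq_div_two_le hy

lemma stdNormalCDF_nonneg (s : ℝ) : 0 ≤ stdNormalCDF s :=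
  setIntegral_nonneg measurableSet_Iic fun _ _ => by positivity

lemma two_mul_stdNormalCDF_neg_le {y : ℝ} (hy : 1 ≤ y) :
    2 * stdNormalCDF (-y) ≤ sqrt (2 / π) * exp (-y ^ 2 / 2) := by
  have hconst : sqrt (2 / π) = 2 / sqrt (2 * π) := by
    rw [sqrt_div zero_le_two, sqrt_mul zero_le_two, ← div_div, div_sqrt]
  calc 2 * stdNormalCDF (-y)
      ≤ 2 * (exp (-y ^ 2 / 2) / (y * sqrt (2 * π))) :=
        mul_le_mul_of_nonneg_left (stdNormalCDF_neg_le (by linarith)) zero_le_two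
    _ ≤ 2 * (exp (-y ^ 2 / 2) / sqrt (2 * π)) := by
        gcongr
        exact le_mul_of_one_le_left (sqrt_nonneg _) hy
    _ = sqrt (2 / π) * exp (-y ^ 2 / 2) := by rw [hconst]; ring

/-- Reflection-principle bound: for `n ≥ 1` and `x ≥ √n`,
`(2Φ(-x/√n))ⁿ ≤ (2^{3n/2}/π^{n/2}) e^{-x²/2}`. -/
theorem reflection_principle_exit_bound (n : ℕ) (hn : 1 ≤ n) (x : ℝ)
    (hx : Real.sqrt n ≤ x) :
    (2 * stdNormalCDF (-x / Real.sqrt n)) ^ n ≤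
      (2 : ℝ) ^ ((3 * (n : ℝ)) / 2) / Real.pi ^ ((n : ℝ) / 2) * Real.exp (-x ^ 2 / 2) := by
  have hsqrt_n : 0 < sqrt n := sqrt_pos.2 (by exact_mod_cast hn)
  set y := x / sqrt n with hy_def
  have hy : 1 ≤ y := (one_le_div hsqrt_n).2 hx
  have hx_sq : x ^ 2 = n * y ^ 2 := by
    rw [hy_def, div_pow, sq_sqrt n.cast_nonneg, mul_div_cancel₀ _ (by positivity)]
  rw [neg_div]
  calc (2 * stdNormalCDF (-y)) ^ n
      ≤ (sqrt (2 / π) * exp (-y ^ 2 / 2)) ^ n :=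
        pow_le_pow_left₀ (mul_nonneg zero_le_two (stdNormalCDF_nonneg _))
          (two_mul_stdNormalCDF_neg_le hy) n
    _ = 2 ^ ((n : ℝ) / 2) / π ^ ((n : ℝ) / 2) * exp (-x ^ 2 / 2) := by
        rw [mul_pow, ← rpow_natCast, ← rpow_div_two_eq_sqrt _ (by positivity),
          div_rpow zero_le_two pi_pos.le, ← exp_nat_mul, hx_sq]
        ring_nf
    _ ≤ 2 ^ ((3 * (n : ℝ)) / 2) / π ^ ((n : ℝ) / 2) * exp (-x ^ 2 / 2) := by
        gcongr
        · norm_num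
        · linarith [(n.cast_nonneg : (0 : ℝ) ≤ n)]
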